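/- arXiv:1302.1384 — 4 statements merged into one kernel-verified Lean document; each statement's English description precedes it below -/
import Mathlib

section
/- Let n ≥ 1 be an integer and let p be a prime. Then every Sylow p-subgroup P of the symmetric group Sym(n) satisfies |P| ≤ 2^(n-1). -/
/-!
A Sylow `p`-subgroup of `Sym(n)` has order `p ^ v`, where `v = v_p(n!)`. By Legendre's formula
`(p - 1) * v = n - s_p(n)`, with `s_p(n) ≥ 1` the base-`p` digit sum of `n ≥ 1`, so
`(p - 1) * v ≤ n - 1`. Since `p ≤ 2 ^ (p - 1)`, we get `p ^ v ≤ 2 ^ ((p - 1) * v) ≤ 2 ^ (n - 1)`.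
-/

theorem Nat.le_two_pow_sub_one (p : ℕ) : p ≤ 2 ^ (p - 1) := by
  have := (p - 1).lt_two_pow_self
  omega

theorem sub_one_mul_padicValNat_factorial_le_sub_one (p : ℕ) [Fact p.Prime] (n : ℕ) :
    (p - 1) * padicValNat p n.factorial ≤ n - 1 := by
  rcases eq_or_ne n 0 with rfl | hn
  · simp
  · have := sub_one_mul_padicValNat_factorial_lt_of_ne_zero p hn
    omega

theorem pow_padicValNat_factorial_le_two_pow (p : ℕ) [Fact p.Prime] (n : ℕ) :
    p ^ padicValNat p n.factorial ≤ 2 ^ (n - 1) :=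
  calc p ^ padicValNat p n.factorial ≤ (2 ^ (p - 1)) ^ padicValNat p n.factorial :=
        Nat.pow_le_pow_left p.le_two_pow_sub_one _
    _ = 2 ^ ((p - 1) * padicValNat p n.factorial) := (pow_mul ..).symm
    _ ≤ 2 ^ (n - 1) :=
        Nat.pow_le_pow_right two_pos (sub_one_mul_padicValNat_factorial_le_sub_one p n)

theorem Sylow.card_perm_eq_pow_padicValNat_factorial {α : Type*} [Fintype α] {p : ℕ}
    [Fact p.Prime] (P : Sylow p (Equiv.Perm α)) :
    Nat.card P = p ^ padicValNat p (Fintype.card α).factorial := by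
  rw [P.card_eq_multiplicity, Nat.card_perm, Nat.card_eq_fintype_card,
    Nat.factorization_def _ Fact.out]

theorem sylow_card_perm_le_two_pow_general (n p : ℕ) (hp : p.Prime)
    (P : Sylow p (Equiv.Perm (Fin n))) :
    Nat.card P ≤ 2 ^ (n - 1) := by
  have : Fact p.Prime := ⟨hp⟩
  rw [P.card_perm_eq_pow_padicValNat_factorial, Fintype.card_fin]
  exact pow_padicValNat_factorial_le_two_pow p n

/-- Let `n ≥ 1` be an integer and let `p` be a prime. Then every Sylow `p`-subgroup `P`
of the symmetric group `Sym(n)` satisfies `|P| ≤ 2 ^ (n - 1)`. -/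
theorem sylow_card_perm_le_two_pow (n p : ℕ) (hn : 1 ≤ n) (hp : p.Prime)
    (P : Sylow p (Equiv.Perm (Fin n))) :
    Nat.card P ≤ 2 ^ (n - 1) :=
  sylow_card_perm_le_two_pow_general n p hp P
end

section
/- For every integer n ≥ 0, the number of elements x of the symmetric group Sym(n) satisfying x² = 1 (including the identity) is at most 2^n · (n!)^(1/2). -/
open Equiv

namespace CardSqAux

variable {α β : Type*}

lemma sq_iff (x : Perm α) : x ^ 2 = 1 ↔ ∀ i, x (x i) = i := by
  simp [sq, Equiv.ext_iff, Perm.mul_apply]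

lemma optionCongr_mul [DecidableEq α] (a b : Perm α) :
    (a * b).optionCongr = a.optionCongr * b.optionCongr := by
  ext i; cases i <;> simp [Perm.mul_apply]

lemma removeNone_sq [DecidableEq α] (x : Perm (Option α)) (hx : x ^ 2 = 1) :
    removeNone x ^ 2 = 1 := by
  have hfa : ∀ i, x (x i) = i := (sq_iff x).1 hx
  set s : Perm (Option α) := swap none (x none) with hs
  have hconj : x * s * x⁻¹ = swap (x none) (x (x none)) := by
    rw [← swap_apply_apply]
  have hsx : (s * x) * (s * x) = 1 := by
    have : x * s * x = s := by
      rw [show x * s * x = x * s * x⁻¹ * (x * x) by group, hconj, hfa none,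
        ← sq, hx, mul_one, swap_comm]
    calc (s * x) * (s * x) = s * (x * s * x) := by group
    _ = s * s := by rw [this]
    _ = 1 := by rw [hs, swap_mul_self]
  have h2 : (removeNone x).optionCongr ^ 2 = 1 := by
    rw [map_equiv_removeNone, sq]
    exact hsx
  apply Equiv.optionCongr_injective
  rw [sq] at h2 ⊢
  rw [optionCongr_mul, h2, Equiv.optionCongr_one]

lemma removeNone_fix [DecidableEq α] (x : Perm (Option α)) (hx : x ^ 2 = 1) (a : α)
    (ha : x none = some a) : removeNone x a = a := by
  have hfa : ∀ i, x (x i) = i := (sq_iff x).1 hx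
  have := congrArg (fun e : Perm (Option α) => e (some a)) (map_equiv_removeNone x)
  simp only [optionCongr_apply, Option.map_some, Perm.mul_apply] at this
  rw [← ha, hfa none, ha] at this
  simpa [swap_apply_left, ha] using this

lemma card_congr (e : α ≃ β) :
    Nat.card {x : Perm α // x ^ 2 = 1} = Nat.card {x : Perm β // x ^ 2 = 1} := by
  apply Nat.card_congr
  refine (Equiv.permCongr e).subtypeEquiv fun x => ?_
  rw [sq_iff, sq_iff]
  constructor
  · intro h b
    simp [permCongr_apply, h]
  · intro h i
    have := h (e i)
    simpa [permCongr_apply] using this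

lemma optionCongr_removeNone_of_none [DecidableEq α] (r : Perm (Option α))
    (h : r none = none) : (removeNone r).optionCongr = r := by
  rw [map_equiv_removeNone, h, swap_self, ← Perm.one_def, one_mul]

/-- conjugate by `swap none a` -/
def shrinkPerm [DecidableEq α] (a : Option α) (m : Perm (Option α)) : Perm (Option α) :=
  swap none a * m * swap none a

lemma shrinkPerm_sq [DecidableEq α] (a : Option α) (m : Perm (Option α)) (hm : m ^ 2 = 1) :
    shrinkPerm a m ^ 2 = 1 := by
  have hc : swap none a * swap none a = (1 : Perm (Option α)) := swap_mul_self _ _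
  have h1 : shrinkPerm a m * shrinkPerm a m
      = swap none a * (m * (swap none a * swap none a) * m) * swap none a := by
    unfold shrinkPerm; group
  rw [sq, h1, hc, mul_one, ← sq, hm, mul_one, hc]

lemma shrinkPerm_none [DecidableEq α] (a : Option α) (m : Perm (Option α)) (hm : m a = a) :
    shrinkPerm a m none = none := by
  simp [shrinkPerm, Perm.mul_apply, swap_apply_left, hm, swap_apply_right]

lemma shrinkPerm_inj [DecidableEq α] (a : Option α) {m m' : Perm (Option α)}
    (h : shrinkPerm a m = shrinkPerm a m') : m = m' := by
  unfold shrinkPerm at h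
  exact mul_left_cancel (mul_right_cancel h)

noncomputable def Φ [DecidableEq α] (x : {x : Perm (Option (Option α)) // x ^ 2 = 1}) :
    {y : Perm (Option α) // y ^ 2 = 1} ⊕ ((Option α) × {y : Perm α // y ^ 2 = 1}) :=
  if h : (x : Perm (Option (Option α))) none = none then
    Sum.inl ⟨removeNone x.1, removeNone_sq _ x.2⟩
  else
    let a : Option α := ((x : Perm (Option (Option α))) none).get
      (Option.ne_none_iff_isSome.mp h)
    let r : Perm (Option α) := shrinkPerm a (removeNone x.1)
    Sum.inr (a, ⟨removeNone r, removeNone_sq r (shrinkPerm_sq _ _ (removeNone_sq _ x.2))⟩)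

lemma Φ_inj [DecidableEq α] : Function.Injective (Φ (α := α)) := by
  intro x y h
  by_cases hx : (x : Perm (Option (Option α))) none = none <;>
    by_cases hy : (y : Perm (Option (Option α))) none = none
  · rw [Φ, dif_pos hx, Φ, dif_pos hy] at h
    have h2 : removeNone x.1 = removeNone y.1 := congrArg Subtype.val (Sum.inl_injective h)
    refine Subtype.ext (Equiv.Perm.decomposeOption.injective ?_)
    simp only [Perm.decomposeOption_apply]
    rw [hx, hy, h2]
  · rw [Φ, dif_pos hx, Φ, dif_neg hy] at h; exact absurd h (by simp)
  · rw [Φ, dif_neg hx, Φ, dif_pos hy] at h; exact absurd h (by simp)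
  · rw [Φ, dif_neg hx, Φ, dif_neg hy] at h
    have hpair := Sum.inr_injective h
    have ha : ((x : Perm (Option (Option α))) none).get (Option.ne_none_iff_isSome.mp hx)
        = ((y : Perm (Option (Option α))) none).get (Option.ne_none_iff_isSome.mp hy) :=
      congrArg Prod.fst hpair
    set a := ((x : Perm (Option (Option α))) none).get (Option.ne_none_iff_isSome.mp hx) with hadef
    have hxa : (x : Perm (Option (Option α))) none = some a := (Option.some_get _).symm
    have hya : (y : Perm (Option (Option α))) none = some a := by
      rw [← Option.some_get (Option.ne_none_iff_isSome.mp hy), ← ha]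
    have h2 : removeNone (shrinkPerm a (removeNone x.1))
        = removeNone (shrinkPerm a (removeNone y.1)) := by
      have := congrArg Prod.snd hpair
      have := congrArg Subtype.val this
      simpa [← hadef, ← ha] using this
    have hrx : shrinkPerm a (removeNone x.1) none = none :=
      shrinkPerm_none _ _ (removeNone_fix _ x.2 _ hxa)
    have hry : shrinkPerm a (removeNone y.1) none = none :=
      shrinkPerm_none _ _ (removeNone_fix _ y.2 _ hya)
    have h3 : shrinkPerm a (removeNone x.1) = shrinkPerm a (removeNone y.1) := by
      rw [← optionCongr_removeNone_of_none _ hrx, ← optionCongr_removeNone_of_none _ hry, h2]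
    have h4 : removeNone x.1 = removeNone y.1 := shrinkPerm_inj a h3
    refine Subtype.ext (Equiv.Perm.decomposeOption.injective ?_)
    simp only [Perm.decomposeOption_apply]
    rw [hxa, hya, h4]

lemma key (α : Type*) [DecidableEq α] [Fintype α] :
    Nat.card {x : Perm (Option (Option α)) // x ^ 2 = 1}
      ≤ Nat.card {y : Perm (Option α) // y ^ 2 = 1}
        + (Fintype.card α + 1) * Nat.card {y : Perm α // y ^ 2 = 1} := by
  have := Nat.card_le_card_of_injective _ (Φ_inj (α := α))
  rwa [Nat.card_sum, Nat.card_prod, Nat.card_eq_fintype_card (α := Option α),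
    Fintype.card_option] at this

end CardSqAux

namespace CardSqAux

lemma key_fin (m : ℕ) :
    Nat.card {x : Perm (Fin (m+2)) // x ^ 2 = 1}
      ≤ Nat.card {x : Perm (Fin (m+1)) // x ^ 2 = 1}
        + (m+1) * Nat.card {x : Perm (Fin m) // x ^ 2 = 1} := by
  rw [card_congr ((finSuccEquiv (m+1)).trans (Equiv.optionCongr (finSuccEquiv m))),
    card_congr (finSuccEquiv m)]
  simpa using key (Fin m)

lemma arith (m : ℕ) :
    2^(m+1) * Real.sqrt (Nat.factorial (m+1)) + ((m:ℝ)+1) * (2^m * Real.sqrt (Nat.factorial m))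
      ≤ 2^(m+2) * Real.sqrt (Nat.factorial (m+2)) := by
  set s : ℝ := Real.sqrt (Nat.factorial m) with hsdef
  have hs : (0:ℝ) ≤ s := Real.sqrt_nonneg _
  set t : ℝ := Real.sqrt ((m:ℝ)+1) with htdef
  set u : ℝ := Real.sqrt (((m:ℝ)+2) * ((m:ℝ)+1)) with hudef
  have ht : (0:ℝ) ≤ t := Real.sqrt_nonneg _
  have hu : (0:ℝ) ≤ u := Real.sqrt_nonneg _
  have h1 : Real.sqrt (Nat.factorial (m+1)) = t * s := by
    rw [htdef, hsdef, ← Real.sqrt_mul (by positivity), Nat.factorial_succ]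
    push_cast
    ring_nf
  have h2 : Real.sqrt (Nat.factorial (m+2)) = u * s := by
    rw [hudef, hsdef, ← Real.sqrt_mul (by positivity), Nat.factorial_succ, Nat.factorial_succ]
    push_cast
    ring_nf
  have hA : t ≤ u := Real.sqrt_le_sqrt (by nlinarith [Nat.cast_nonneg (α := ℝ) m])
  have hB : (m:ℝ)+1 ≤ u := by
    rw [show (m:ℝ)+1 = Real.sqrt (((m:ℝ)+1)^2) from (Real.sqrt_sq (by positivity)).symm, hudef]
    exact Real.sqrt_le_sqrt (by nlinarith [Nat.cast_nonneg (α := ℝ) m])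
  have hmain : 2 * t + ((m:ℝ)+1) ≤ 4 * u := by linarith
  have hpos : (0:ℝ) ≤ 2^m * s := by positivity
  calc 2^(m+1) * Real.sqrt (Nat.factorial (m+1)) + ((m:ℝ)+1) * (2^m * s)
      = (2^m * s) * (2 * t + ((m:ℝ)+1)) := by rw [h1]; ring
    _ ≤ (2^m * s) * (4 * u) := by
        exact mul_le_mul_of_nonneg_left hmain hpos
    _ = 2^(m+2) * (u * s) := by ring
    _ = 2^(m+2) * Real.sqrt (Nat.factorial (m+2)) := by rw [h2]

end CardSqAux

/-- For every integer `n ≥ 0`, the number of elements `x` of the symmetric group `Sym(n)`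
satisfying `x² = 1` (including the identity) is at most `2 ^ n · (n!) ^ (1/2)`. -/
theorem card_sq_eq_one_perm_le (n : ℕ) :
    (Nat.card {x : Equiv.Perm (Fin n) // x ^ 2 = 1} : ℝ)
      ≤ 2 ^ n * Real.sqrt (Nat.factorial n) := by
  induction n using Nat.strong_induction_on with
  | _ n ih =>
    obtain _ | _ | m := n
    · have h1 : Nat.card {x : Equiv.Perm (Fin 0) // x ^ 2 = 1} ≤ 1 := by
        rw [Nat.card_eq_fintype_card]
        calc Fintype.card {x : Equiv.Perm (Fin 0) // x ^ 2 = 1}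
            ≤ Fintype.card (Equiv.Perm (Fin 0)) := Fintype.card_subtype_le _
          _ = 1 := by simp [Fintype.card_perm]
      have h2 : (Nat.card {x : Equiv.Perm (Fin 0) // x ^ 2 = 1} : ℝ) ≤ 1 := by exact_mod_cast h1
      simp only [pow_zero, Nat.factorial_zero, Nat.cast_one, Real.sqrt_one, one_mul]
      exact h2
    · show (Nat.card {x : Equiv.Perm (Fin 1) // x ^ 2 = 1} : ℝ)
          ≤ 2 ^ 1 * Real.sqrt (Nat.factorial 1)
      have h1 : Nat.card {x : Equiv.Perm (Fin 1) // x ^ 2 = 1} ≤ 1 := by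
        rw [Nat.card_eq_fintype_card]
        calc Fintype.card {x : Equiv.Perm (Fin 1) // x ^ 2 = 1}
            ≤ Fintype.card (Equiv.Perm (Fin 1)) := Fintype.card_subtype_le _
          _ = 1 := by simp [Fintype.card_perm]
      have h2 : (Nat.card {x : Equiv.Perm (Fin 1) // x ^ 2 = 1} : ℝ) ≤ 1 := by exact_mod_cast h1
      have : (1:ℝ) ≤ 2 ^ 1 * Real.sqrt (Nat.factorial 1) := by
        simp [Nat.factorial]
      linarith
    · have hk := CardSqAux.key_fin m
      have ih1 := ih (m+1) (by omega)
      have ih0 := ih m (by omega)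
      have hk' : (Nat.card {x : Equiv.Perm (Fin (m+2)) // x ^ 2 = 1} : ℝ)
          ≤ (Nat.card {x : Equiv.Perm (Fin (m+1)) // x ^ 2 = 1} : ℝ)
            + ((m:ℝ)+1) * (Nat.card {x : Equiv.Perm (Fin m) // x ^ 2 = 1} : ℝ) := by
        exact_mod_cast hk
      have step : (Nat.card {x : Equiv.Perm (Fin (m+1)) // x ^ 2 = 1} : ℝ)
            + ((m:ℝ)+1) * (Nat.card {x : Equiv.Perm (Fin m) // x ^ 2 = 1} : ℝ)
          ≤ 2^(m+1) * Real.sqrt (Nat.factorial (m+1))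
            + ((m:ℝ)+1) * (2^m * Real.sqrt (Nat.factorial m)) := by
        have h0 : (0:ℝ) ≤ (m:ℝ)+1 := by positivity
        nlinarith [mul_le_mul_of_nonneg_left ih0 h0]
      calc (Nat.card {x : Equiv.Perm (Fin (m+2)) // x ^ 2 = 1} : ℝ)
          ≤ _ := hk'
        _ ≤ _ := step
        _ ≤ 2^(m+2) * Real.sqrt (Nat.factorial (m+2)) := CardSqAux.arith m
end

section
/- For every real number q ≥ 2, the infinite product ∏_{i=1}^{∞} (1 − q^(−i)) converges and is strictly greater than 1 − q^(−1) − q^(−2). -/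
open Finset

private lemma weierstrass_one_sub (x : ℕ → ℝ) (hx : ∀ i, 0 ≤ x i) (hx1 : ∀ i, x i ≤ 1)
    (s : Finset ℕ) : 1 - ∑ i ∈ s, x i ≤ ∏ i ∈ s, (1 - x i) := by
  induction s using Finset.cons_induction with
  | empty => simp
  | cons a s ha ih =>
    rw [Finset.prod_cons, Finset.sum_cons]
    have h1 : 0 ≤ 1 - x a := by linarith [hx1 a]
    have h2 : (1 - x a) * (1 - ∑ i ∈ s, x i) ≤ (1 - x a) * ∏ i ∈ s, (1 - x i) :=
      mul_le_mul_of_nonneg_left ih h1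
    have hs : 0 ≤ ∑ i ∈ s, x i := Finset.sum_nonneg (fun i _ => hx i)
    nlinarith [hx a]

/-- For every real number `q ≥ 2`, the infinite product `∏_{i=1}^{∞} (1 − q^(−i))`
converges and is strictly greater than `1 − q⁻¹ − q⁻²`. -/
theorem multipliable_and_one_sub_inv_sub_inv_sq_lt_tprod (q : ℝ) (hq : 2 ≤ q) :
    Multipliable (fun i : ℕ => 1 - q⁻¹ ^ (i + 1)) ∧
      1 - q⁻¹ - q⁻¹ ^ 2 < ∏' i : ℕ, (1 - q⁻¹ ^ (i + 1)) := by
  set r : ℝ := q⁻¹ with hr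
  have hq0 : (0:ℝ) < q := by linarith
  have hr0 : 0 < r := inv_pos.mpr hq0
  have hr2 : r ≤ 1/2 := by
    rw [hr]
    rw [inv_le_comm₀ hq0 (by norm_num)]
    linarith
  have hr1 : r < 1 := by linarith
  set f : ℕ → ℝ := fun i => 1 - r ^ (i + 1) with hf
  have hfpos : ∀ i, 0 < f i := by
    intro i
    have : r ^ (i + 1) < 1 := pow_lt_one₀ hr0.le hr1 (Nat.succ_ne_zero i)
    simp only [hf]; linarith
  have hfle1 : ∀ i, f i ≤ 1 := by
    intro i
    have : 0 ≤ r ^ (i + 1) := pow_nonneg hr0.le _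
    simp only [hf]; linarith
  -- partial products are antitone in the finset
  have hanti : Antitone (fun s : Finset ℕ => ∏ i ∈ s, f i) := by
    intro s t hst
    have := Finset.prod_sdiff hst (f := f)
    calc ∏ i ∈ t, f i = (∏ i ∈ t \ s, f i) * ∏ i ∈ s, f i := this.symm
      _ ≤ 1 * ∏ i ∈ s, f i := by
          apply mul_le_mul_of_nonneg_right _ (Finset.prod_nonneg fun i _ => (hfpos i).le)
          exact Finset.prod_le_one (fun i _ => (hfpos i).le) (fun i _ => hfle1 i)
      _ = ∏ i ∈ s, f i := one_mul _
  -- lower bound on all finset products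
  set c : ℝ := 1 - r - r ^ 2 + r ^ 5 with hc
  have htail : ∀ N : ℕ, 1 - r ^ 3 / (1 - r) ≤ ∏ i ∈ Finset.Ico 2 N, f i := by
    intro N
    have hW := weierstrass_one_sub (fun i => r ^ (i + 1)) (fun i => pow_nonneg hr0.le _)
      (fun i => (pow_lt_one₀ hr0.le hr1 (Nat.succ_ne_zero i)).le) (Finset.Ico 2 N)
    refine le_trans ?_ hW
    have hsum : ∑ i ∈ Finset.Ico 2 N, r ^ (i + 1) ≤ r ^ 3 / (1 - r) := by
      rcases le_or_gt 2 N with h2N | h2N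
      · rw [Finset.sum_Ico_eq_sum_range]
        have heq : ∀ j ∈ Finset.range (N - 2), r ^ (2 + j + 1) = r ^ 3 * r ^ j := by
          intro j _; ring
        rw [Finset.sum_congr rfl heq, ← Finset.mul_sum]
        rw [div_eq_mul_inv]
        apply mul_le_mul_of_nonneg_left _ (pow_nonneg hr0.le 3)
        calc ∑ j ∈ Finset.range (N - 2), r ^ j
            ≤ ∑' j : ℕ, r ^ j := Summable.sum_le_tsum _
              (fun j _ => pow_nonneg hr0.le j) (summable_geometric_of_lt_one hr0.le hr1)
          _ = (1 - r)⁻¹ := tsum_geometric_of_lt_one hr0.le hr1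
      · rw [Finset.Ico_eq_empty (by omega)]
        simp only [Finset.sum_empty]
        have h1r : (0:ℝ) < 1 - r := by linarith
        positivity
    linarith
  have htail0 : (0:ℝ) ≤ 1 - r ^ 3 / (1 - r) := by
    have h1r : (0:ℝ) < 1 - r := by linarith
    rw [sub_nonneg, div_le_one h1r]
    nlinarith
  have hrangeN : ∀ N : ℕ, 2 ≤ N → c ≤ ∏ i ∈ Finset.range N, f i := by
    intro N hN
    rw [← Finset.prod_range_mul_prod_Ico f hN]
    have h01 : ∏ i ∈ Finset.range 2, f i = (1 - r) * (1 - r ^ 2) := by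
      simp [hf, Finset.prod_range_succ]
      try ring
    rw [h01]
    have hpos01 : 0 ≤ (1 - r) * (1 - r ^ 2) := by nlinarith
    calc c = (1 - r) * (1 - r ^ 2) * (1 - r ^ 3 / (1 - r)) := by
            have h1r : (1:ℝ) - r ≠ 0 := by linarith
            field_simp
            try ring
      _ ≤ (1 - r) * (1 - r ^ 2) * ∏ i ∈ Finset.Ico 2 N, f i :=
            mul_le_mul_of_nonneg_left (htail N) hpos01
  have hlb : ∀ s : Finset ℕ, c ≤ ∏ i ∈ s, f i := by
    intro s
    obtain ⟨N, hsN⟩ := s.exists_nat_subset_range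
    have hsub : s ⊆ Finset.range (max N 2) :=
      hsN.trans (Finset.range_subset_range.mpr (le_max_left _ _))
    exact (hrangeN _ (le_max_right _ _)).trans (hanti hsub)
  have hbdd : BddBelow (Set.range fun s : Finset ℕ => ∏ i ∈ s, f i) := by
    refine ⟨c, ?_⟩
    rintro x ⟨s, rfl⟩
    exact hlb s
  have hHasProd : HasProd f (⨅ s : Finset ℕ, ∏ i ∈ s, f i) :=
    tendsto_atTop_ciInf hanti hbdd
  have hmult : Multipliable f := ⟨_, hHasProd⟩
  refine ⟨hmult, ?_⟩
  have htprod : ∏' i, f i = ⨅ s : Finset ℕ, ∏ i ∈ s, f i := hHasProd.tprod_eq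
  have hcle : c ≤ ∏' i, f i := by
    rw [htprod]
    exact le_ciInf hlb
  have : 1 - r - r ^ 2 < c := by
    have : 0 < r ^ 5 := pow_pos hr0 5
    simp only [hc]; linarith
  calc 1 - r - r ^ 2 < c := this
    _ ≤ ∏' i, f i := hcle
end

section
/- Let q ≥ 2 be an integer and let m ≥ k ≥ 0 be integers. Then the Gaussian binomial coefficient at q², namely (m choose k)_{q²} = ∏_{i=1}^{k} (q^(2(m−k+i)) − 1)/(q^(2i) − 1), satisfies (m choose k)_{q²} < q^(2k(m−k)) · (1 − q^(−2) − q^(−4))^(−1). -/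
lemma aux_prod_lb (x : ℝ) (hx0 : 0 ≤ x) (hx : x ≤ 1/4) :
    ∀ n, 1 ≤ n → 1 - x - x^2 + x^(n+1) ≤ ∏ i ∈ Finset.range n, (1 - x^(i+1)) := by
  intro n hn
  induction n, hn using Nat.le_induction with
  | base => simp
  | succ n hn ih =>
    rw [Finset.prod_range_succ]
    have hx1 : x ≤ 1 := by linarith
    have hxn1 : x^(n+1) ≤ 1 := pow_le_one₀ hx0 hx1
    have hA : (0:ℝ) < 1 - x - x^2 + x^(n+1) := by
      have : x^(n+1) ≥ 0 := pow_nonneg hx0 _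
      nlinarith
    have h2 : x^(2*n+2) ≤ x^(n+3) := pow_le_pow_of_le_one hx0 hx1 (by omega)
    have step : 1 - x - x^2 + x^(n+1+1) ≤ (1 - x - x^2 + x^(n+1)) * (1 - x^(n+1)) := by
      have e1 : x^(n+1) * x^(n+1) = x^(2*n+2) := by ring
      have e2 : x^(n+1) * x = x^(n+2) := by ring
      have e3 : x^(n+1) * x^2 = x^(n+3) := by ring
      nlinarith [pow_nonneg hx0 (n+2), pow_nonneg hx0 (n+3)]
    calc 1 - x - x^2 + x^(n+1+1) ≤ (1 - x - x^2 + x^(n+1)) * (1 - x^(n+1)) := step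
      _ ≤ (∏ i ∈ Finset.range n, (1 - x^(i+1))) * (1 - x^(n+1)) := by
          apply mul_le_mul_of_nonneg_right ih (by linarith)

/-- Let `q ≥ 2` and `m ≥ k ≥ 0` be integers. Then the Gaussian binomial coefficient at
`q²`, namely `(m choose k)_{q²} = ∏_{i=1}^{k} (q^(2(m−k+i)) − 1)/(q^(2i) − 1)`,
satisfies `(m choose k)_{q²} < q^(2k(m−k)) · (1 − q^(−2) − q^(−4))⁻¹`. -/
theorem gaussian_binomial_q_sq_lt (q m k : ℕ) (hq : 2 ≤ q) (hk : k ≤ m) :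
    (∏ i ∈ Finset.range k,
        (((q : ℝ) ^ (2 * (m - k + i + 1)) - 1) / ((q : ℝ) ^ (2 * (i + 1)) - 1)))
      < (q : ℝ) ^ (2 * k * (m - k))
          * (1 - (q : ℝ) ^ (-2 : ℤ) - (q : ℝ) ^ (-4 : ℤ))⁻¹ := by
  have hq2 : (2:ℝ) ≤ (q:ℝ) := by exact_mod_cast hq
  have hq0 : (0:ℝ) < (q:ℝ) := by linarith
  have hqne : (q:ℝ) ≠ 0 := ne_of_gt hq0
  set x : ℝ := ((q:ℝ)^2)⁻¹ with hxdef
  have hx0 : 0 < x := by positivity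
  have hx14 : x ≤ 1/4 := by
    rw [hxdef]
    rw [inv_le_comm₀ (by positivity) (by norm_num)]
    nlinarith
  have hrhs : 1 - (q : ℝ) ^ (-2 : ℤ) - (q : ℝ) ^ (-4 : ℤ) = 1 - x - x^2 := by
    rw [hxdef]
    rw [show (-2:ℤ) = -(2:ℕ) by norm_num, show (-4:ℤ) = -(4:ℕ) by norm_num,
      zpow_neg, zpow_neg, zpow_natCast, zpow_natCast]
    ring
  have hden : (0:ℝ) < 1 - x - x^2 := by nlinarith
  rw [hrhs]
  rcases Nat.eq_zero_or_pos k with rfl | hkpos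
  · simp
    have hinv : (0:ℝ) < (1 - x - x^2)⁻¹ := inv_pos.mpr hden
    have hmul : (1 - x - x^2) * (1 - x - x^2)⁻¹ = 1 := mul_inv_cancel₀ hden.ne'
    nlinarith
  -- per-factor bound
  have hfact : ∀ i ∈ Finset.range k,
      ((q : ℝ) ^ (2 * (m - k + i + 1)) - 1) / ((q : ℝ) ^ (2 * (i + 1)) - 1)
        < (q:ℝ) ^ (2 * (m - k)) * (1 - x^(i+1))⁻¹ := by
    intro i _
    have hb : (1:ℝ) < (q:ℝ) ^ (2 * (i + 1)) := by
      apply one_lt_pow₀ (by linarith) (by omega)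
    have hbpos : (0:ℝ) < (q:ℝ) ^ (2 * (i + 1)) - 1 := by linarith
    have hg : (q:ℝ) ^ (2 * (m - k)) * (1 - x^(i+1))⁻¹
        = (q:ℝ) ^ (2 * (m - k + i + 1)) / ((q : ℝ) ^ (2 * (i + 1)) - 1) := by
      have hx' : x^(i+1) = ((q:ℝ) ^ (2 * (i+1)))⁻¹ := by
        rw [hxdef, inv_pow, ← pow_mul]
      rw [hx']
      have h1 : (1 - ((q:ℝ) ^ (2 * (i+1)))⁻¹) = ((q : ℝ) ^ (2 * (i + 1)) - 1) / (q:ℝ) ^ (2 * (i+1)) := by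
        field_simp
      rw [h1, inv_div]
      rw [show 2 * (m - k + i + 1) = 2 * (m-k) + 2 * (i+1) by ring, pow_add]
      field_simp
    rw [hg]
    apply div_lt_div_of_pos_right (by linarith) hbpos
  have hprodlt : (∏ i ∈ Finset.range k,
        (((q : ℝ) ^ (2 * (m - k + i + 1)) - 1) / ((q : ℝ) ^ (2 * (i + 1)) - 1)))
      < ∏ i ∈ Finset.range k, ((q:ℝ) ^ (2 * (m - k)) * (1 - x^(i+1))⁻¹) := by
    apply Finset.prod_lt_prod_of_nonempty
    · intro i _
      have hb : (1:ℝ) < (q:ℝ) ^ (2 * (i + 1)) := one_lt_pow₀ (by linarith) (by omega)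
      have ha : (1:ℝ) < (q:ℝ) ^ (2 * (m - k + i + 1)) := one_lt_pow₀ (by linarith) (by omega)
      exact div_pos (by linarith) (by linarith)
    · exact hfact
    · exact Finset.nonempty_range_iff.mpr (by omega)
  have hxone : x ≤ 1 := by linarith
  have hprodpos : (0:ℝ) < ∏ i ∈ Finset.range k, (1 - x^(i+1)) := by
    apply Finset.prod_pos
    intro i _
    have : x^(i+1) < 1 := by
      calc x^(i+1) ≤ x := pow_le_of_le_one (le_of_lt hx0) hxone (by omega)
        _ < 1 := by linarith
    linarith
  have hlb : 1 - x - x^2 ≤ ∏ i ∈ Finset.range k, (1 - x^(i+1)) := by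
    have := aux_prod_lb x (le_of_lt hx0) hx14 k hkpos
    have hpos : (0:ℝ) ≤ x^(k+1) := pow_nonneg (le_of_lt hx0) _
    linarith
  calc (∏ i ∈ Finset.range k,
        (((q : ℝ) ^ (2 * (m - k + i + 1)) - 1) / ((q : ℝ) ^ (2 * (i + 1)) - 1)))
      < ∏ i ∈ Finset.range k, ((q:ℝ) ^ (2 * (m - k)) * (1 - x^(i+1))⁻¹) := hprodlt
    _ = (q:ℝ) ^ (2 * k * (m - k)) * (∏ i ∈ Finset.range k, (1 - x^(i+1)))⁻¹ := by
        rw [Finset.prod_mul_distrib, Finset.prod_const, Finset.card_range, ← pow_mul,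
          ← Finset.prod_inv_distrib, show 2 * (m - k) * k = 2 * k * (m - k) by ring]
    _ ≤ (q:ℝ) ^ (2 * k * (m - k)) * (1 - x - x^2)⁻¹ := by
        apply mul_le_mul_of_nonneg_left _ (by positivity)
        exact inv_anti₀ hden hlb
end
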